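/- Let G be a non-trivial finitely generated group and consider the free product G∗ℤ = G∗⟨t⟩ with the finite generating set consisting of a finite generating set of G together with t, and associated word metric d. If w ∈ G∗ℤ is such that every minimum-length word for w ends with t, then the cone C(w) = {y ∈ G∗ℤ : d(1,y) = d(1,w) + d(w,y)} is an atom in 𝒜_{|w|}(G∗ℤ). Moreover, any two such atoms C(w), C(w') (for w, w' each ending with t) have the same type. -/

import Mathlib

open scoped Classical

noncomputable section

/-- The word length of `g` with respect to a generating set `S` (using letters from
`S ∪ S⁻¹`). -/
def wordLength {G : Type} [Group G] (S : Set G) (g : G) : ℕ :=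
  sInf {n | ∃ l : List G, l.length = n ∧ (∀ x ∈ l, x ∈ S ∨ x⁻¹ ∈ S) ∧ l.prod = g}

/-- The word metric on `G` with respect to `S`. -/
def wordDist {G : Type} [Group G] (S : Set G) (x y : G) : ℕ :=
  wordLength S (x⁻¹ * y)

/-- `p 0, p 1, …, p n` is a geodesic segment for the word metric. -/
def IsGeodesicSeg {G : Type} [Group G] (S : Set G) (p : ℕ → G) (n : ℕ) : Prop :=
  ∀ i j : ℕ, i ≤ j → j ≤ n → wordDist S (p i) (p j) = j - i

/-- The Cayley graph of `G` with respect to `S` is `δ`-hyperbolic: every side of every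
geodesic triangle lies in the `δ`-neighborhood of the union of the other two sides. -/
def SlimTriangles {G : Type} [Group G] (S : Set G) (δ : ℝ) : Prop :=
  ∀ (p q r : ℕ → G) (np nq nr : ℕ),
    IsGeodesicSeg S p np → IsGeodesicSeg S q nq → IsGeodesicSeg S r nr →
    p np = q 0 → q nq = r 0 → r nr = p 0 →
    ∀ i ≤ np, ∃ j : ℕ,
      (j ≤ nq ∧ (wordDist S (p i) (q j) : ℝ) ≤ δ) ∨
      (j ≤ nr ∧ (wordDist S (p i) (r j) : ℝ) ≤ δ)

/-- A group is hyperbolic if it has a finite generating set whose Cayley graph is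
`δ`-hyperbolic for some `δ > 0`. -/
def IsHyperbolicGroup (G : Type) [Group G] : Prop :=
  ∃ S : Set G, S.Finite ∧ Subgroup.closure S = ⊤ ∧ ∃ δ : ℝ, 0 < δ ∧ SlimTriangles S δ

/-- The ball of radius `n` about the identity. -/
def ball {G : Type} [Group G] (S : Set G) (n : ℕ) : Set G :=
  {x | wordLength S x ≤ n}

/-- `x ∼ y` for the ball `B_n`: the function `d_x - d_y` is constant on `B_n`. -/
def SameAtom {G : Type} [Group G] (S : Set G) (n : ℕ) (x y : G) : Prop :=
  ∀ a ∈ ball S n, ∀ b ∈ ball S n,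
    (wordDist S x a : ℤ) - (wordDist S y a : ℤ) =
      (wordDist S x b : ℤ) - (wordDist S y b : ℤ)

/-- The atom for `B_n` containing `x`. -/
def atomOf {G : Type} [Group G] (S : Set G) (n : ℕ) (x : G) : Set G :=
  {y | SameAtom S n x y}

/-- `𝒜_n(G)`: the infinite atoms for `B_n`. -/
def InfAtoms {G : Type} [Group G] (S : Set G) (n : ℕ) : Set (Set G) :=
  {A | (∃ x, A = atomOf S n x) ∧ A.Infinite}

/-- `g` is a morphism from the atom `A₁ ∈ 𝒜_m(G)` to the atom `A₂ ∈ 𝒜_n(G)`. -/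
def IsMorphism {G : Type} [Group G] (S : Set G) (g : G) (m : ℕ) (A₁ : Set G)
    (n : ℕ) (A₂ : Set G) : Prop :=
  ((g * ·) '' A₁ = A₂) ∧
  (∀ k : ℕ, (g * ·) '' (A₁ ∩ ball S (m + k)) = A₂ ∩ ball S (n + k)) ∧
  ∀ k : ℕ, 0 < k → ∀ A' ∈ InfAtoms S (m + k), A' ⊆ A₁ →
    (g * ·) '' A' ∈ InfAtoms S (n + k) ∧ (g * ·) '' A' ⊆ A₂

/-- Two atoms have the same type if there is a morphism between them. -/
def SameType {G : Type} [Group G] (S : Set G) (m : ℕ) (A₁ : Set G) (n : ℕ)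
    (A₂ : Set G) : Prop :=
  ∃ g : G, IsMorphism S g m A₁ n A₂

/-- `N(A)`: the set of points of `B_n` at which `d̄_A` attains its minimum, i.e. the set
of nearest neighbors in `B_n` of the points of `A`. -/
def nearestSet {G : Type} [Group G] (S : Set G) (n : ℕ) (A : Set G) : Set G :=
  {p | p ∈ ball S n ∧ ∀ x ∈ A, ∀ q ∈ ball S n, wordDist S x p ≤ wordDist S x q}
/-- The free product `G ∗ ℤ`. -/
abbrev FPZ (G : Type) [Group G] : Type := Monoid.Coprod G (Multiplicative ℤ)

/-- The generator `t` of the `ℤ` free factor. -/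
def tGen (G : Type) [Group G] : FPZ G := Monoid.Coprod.inr (Multiplicative.ofAdd 1)

/-- The generating set of `G ∗ ℤ`: a generating set of `G` together with `t`. -/
def fpGen (G : Type) [Group G] (S : Set G) : Set (FPZ G) :=
  (⇑(Monoid.Coprod.inl : G →* FPZ G) '' S) ∪ {tGen G}

/-- The cone `C(w) = {y : |y| = |w| + d(w,y)}`. -/
def coneOf {K : Type} [Group K] (T : Set K) (w : K) : Set K :=
  {y | wordLength T y = wordLength T w + wordDist T w y}

/-- Every minimum-length word for `w` (over the generating set of `G ∗ ℤ`) ends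
with `t`. -/
def EndsWithT (G : Type) [Group G] (S : Set G) (w : FPZ G) : Prop :=
  ∀ l : List (FPZ G), (∀ x ∈ l, x ∈ fpGen G S ∨ x⁻¹ ∈ fpGen G S) →
    l.prod = w → l.length = wordLength (fpGen G S) w → l.getLast? = some (tGen G)


/-!
In the Cayley graph of `G ∗ ℤ` every edge labelled `t` is a bridge: by the normal form theorem
for free products, right multiplication by a generator changes the first letter of a reduced
word only along the edge from `1` to `t`. If every geodesic to `w` ends with `t`, then `1` lies
on the side of `w * t⁻¹` of the bridge from `w * t⁻¹` to `w`, and the cone `C(w)` is exactly the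
side of `w`. Every path leaving `C(w)` thus passes through `w`, so for `y ∈ C(w)` the function
`d_w - d_y` equals `-d(y, w)` on all of `B_{|w|}`, and `C(w)` is the atom of `w`. Translation by
`w' * w⁻¹` is an isometry taking `w` to `w'` and the side of `w` onto the side of `w'`; as the
distances from a point of a cone to the ball are read off through its gate, it maps the atoms
inside `C(w)` onto atoms inside `C(w')`.
-/

namespace WordMetric

variable {K : Type} [Group K] {T : Set K}

theorem wordLength_le_length {g : K} {l : List K} (hl : ∀ x ∈ l, x ∈ T ∨ x⁻¹ ∈ T)
    (hprod : l.prod = g) : wordLength T g ≤ l.length :=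
  Nat.sInf_le ⟨l, rfl, hl, hprod⟩

theorem exists_word (hT : Subgroup.closure T = ⊤) (g : K) :
    ∃ l : List K, (∀ x ∈ l, x ∈ T ∨ x⁻¹ ∈ T) ∧ l.prod = g := by
  have hg : g ∈ Submonoid.closure (T ∪ T⁻¹) := by
    rw [← Subgroup.closure_toSubmonoid, hT]
    trivial
  obtain ⟨l, hl, hprod⟩ := Submonoid.exists_list_of_mem_closure hg
  exact ⟨l, hl, hprod⟩

theorem exists_word_length_eq (hT : Subgroup.closure T = ⊤) (g : K) :
    ∃ l : List K, l.length = wordLength T g ∧ (∀ x ∈ l, x ∈ T ∨ x⁻¹ ∈ T) ∧ l.prod = g := by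
  obtain ⟨l, hl, hprod⟩ := exists_word hT g
  have hne : {n | ∃ l : List K, l.length = n ∧ (∀ x ∈ l, x ∈ T ∨ x⁻¹ ∈ T) ∧ l.prod = g}.Nonempty :=
    ⟨_, l, rfl, hl, hprod⟩
  exact Nat.sInf_mem hne

@[simp]
theorem wordLength_one : wordLength T (1 : K) = 0 :=
  Nat.le_zero.mp (wordLength_le_length (l := []) (by simp) rfl)

theorem wordLength_le_one {s : K} (hs : s ∈ T ∨ s⁻¹ ∈ T) : wordLength T s ≤ 1 :=
  wordLength_le_length (l := [s]) (by simpa using hs) (by simp)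

theorem eq_one_of_wordLength_eq_zero (hT : Subgroup.closure T = ⊤) {g : K}
    (h : wordLength T g = 0) : g = 1 := by
  obtain ⟨l, hlen, -, rfl⟩ := exists_word_length_eq hT g
  rw [h, List.length_eq_zero_iff] at hlen
  simp [hlen]

theorem wordLength_mul_le (hT : Subgroup.closure T = ⊤) (g h : K) :
    wordLength T (g * h) ≤ wordLength T g + wordLength T h := by
  obtain ⟨l₁, hlen₁, hl₁, rfl⟩ := exists_word_length_eq hT g
  obtain ⟨l₂, hlen₂, hl₂, rfl⟩ := exists_word_length_eq hT h
  rw [← hlen₁, ← hlen₂, ← List.length_append, ← List.prod_append]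
  exact wordLength_le_length (by simpa [or_imp, forall_and] using And.intro hl₁ hl₂) rfl

theorem wordLength_inv_le (hT : Subgroup.closure T = ⊤) (g : K) :
    wordLength T g⁻¹ ≤ wordLength T g := by
  obtain ⟨l, hlen, hl, rfl⟩ := exists_word_length_eq hT g
  rw [← hlen, List.prod_inv_reverse, ← List.length_map (f := fun x : K => x⁻¹),
    ← List.length_reverse]
  refine wordLength_le_length (fun x hx => ?_) rfl
  simpa [or_comm] using hl x⁻¹ (by simpa using hx)

theorem wordLength_inv (hT : Subgroup.closure T = ⊤) (g : K) :
    wordLength T g⁻¹ = wordLength T g :=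
  (wordLength_inv_le hT g).antisymm (by simpa using wordLength_inv_le hT g⁻¹)

@[simp]
theorem wordDist_self (x : K) : wordDist T x x = 0 := by
  simp [wordDist]

@[simp]
theorem wordDist_one_left (x : K) : wordDist T 1 x = wordLength T x := by
  simp [wordDist]

theorem wordDist_mul_left (g x y : K) : wordDist T (g * x) (g * y) = wordDist T x y := by
  simp [wordDist, mul_assoc]

theorem wordDist_comm (hT : Subgroup.closure T = ⊤) (x y : K) :
    wordDist T x y = wordDist T y x := by
  rw [wordDist, wordDist, ← wordLength_inv hT]
  simp

theorem wordDist_one_right (hT : Subgroup.closure T = ⊤) (x : K) :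
    wordDist T x 1 = wordLength T x := by
  rw [wordDist_comm hT, wordDist_one_left]

theorem wordDist_triangle (hT : Subgroup.closure T = ⊤) (x y z : K) :
    wordDist T x z ≤ wordDist T x y + wordDist T y z := by
  simpa [wordDist, mul_assoc] using wordLength_mul_le hT (x⁻¹ * y) (y⁻¹ * z)

theorem eq_of_wordDist_eq_zero (hT : Subgroup.closure T = ⊤) {x y : K}
    (h : wordDist T x y = 0) : x = y :=
  (inv_mul_eq_one.mp (eq_one_of_wordLength_eq_zero hT h))

theorem wordDist_mul_le_one (x : K) {s : K} (hs : s ∈ T ∨ s⁻¹ ∈ T) :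
    wordDist T x (x * s) ≤ 1 := by
  simpa [wordDist] using wordLength_le_one hs

end WordMetric

namespace WordMetric

variable {K : Type} [Group K] {T : Set K}

theorem sameAtom_refl (n : ℕ) (x : K) : SameAtom T n x x := by
  intro a _ b _
  simp

theorem one_mem_ball (n : ℕ) : (1 : K) ∈ ball T n := by
  simp [ball]

theorem mem_coneOf_self (w : K) : w ∈ coneOf T w := by
  simp [coneOf]

theorem mem_ball_iff_of_mem_coneOf {w y : K} (hy : y ∈ coneOf T w) (k : ℕ) :
    y ∈ ball T (wordLength T w + k) ↔ wordDist T w y ≤ k := by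
  simp only [ball, Set.mem_ofPred_eq, hy.out, Nat.add_le_add_iff_left]

theorem coneOf_inter_ball (w : K) (k : ℕ) :
    coneOf T w ∩ ball T (wordLength T w + k) = coneOf T w ∩ {y | wordDist T w y ≤ k} := by
  ext y
  simp only [Set.mem_inter_iff, Set.mem_ofPred_eq]
  exact and_congr_right fun hy => mem_ball_iff_of_mem_coneOf hy k

theorem image_mul_left_setOf_wordDist_le (g w : K) (k : ℕ) :
    (g * ·) '' {y | wordDist T w y ≤ k} = {z | wordDist T (g * w) z ≤ k} := by
  ext z
  rw [Set.image_mul_left, Set.mem_preimage, Set.mem_ofPred_eq, Set.mem_ofPred_eq,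
    ← wordDist_mul_left g, mul_inv_cancel_left]

theorem mem_coneOf_of_sameAtom (hT : Subgroup.closure T = ⊤) {w p q : K} {n : ℕ}
    (hn : wordLength T w ≤ n) (hp : p ∈ coneOf T w) (hpq : SameAtom T n p q) :
    q ∈ coneOf T w := by
  have h := hpq 1 (one_mem_ball n) w hn
  rw [wordDist_one_right hT, wordDist_one_right hT, wordDist_comm hT p,
    wordDist_comm hT q] at h
  have hp' := hp.out
  show wordLength T q = wordLength T w + wordDist T w q
  omega

/-- Every path from the cone `C(w)` to its complement passes through `w`. -/
def IsConeGate (T : Set K) (w : K) : Prop :=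
  ∀ x ∈ coneOf T w, ∀ a ∉ coneOf T w, wordDist T x a = wordDist T x w + wordDist T w a

theorem coneOf_eq_atomOf (hT : Subgroup.closure T = ⊤) {w : K} (hw : IsConeGate T w) :
    coneOf T w = atomOf T (wordLength T w) w := by
  ext y
  refine ⟨fun hy => ?_, fun hy => mem_coneOf_of_sameAtom hT le_rfl (mem_coneOf_self w) hy⟩
  have key : ∀ a ∈ ball T (wordLength T w),
      (wordDist T w a : ℤ) - wordDist T y a = -(wordDist T y w : ℤ) := by
    intro a ha
    by_cases hac : a ∈ coneOf T w
    · have had : wordDist T w a = 0 := by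
        simpa using (mem_ball_iff_of_mem_coneOf hac 0).mp (by simpa using ha)
      obtain rfl := eq_of_wordDist_eq_zero hT had
      simp
    · rw [hw y hy a hac]
      push_cast
      ring
  intro a ha b hb
  rw [key a ha, key b hb]

section Morphism

variable {g w w' : K}

theorem image_coneOf_inv (himage : (g * ·) '' coneOf T w = coneOf T w') :
    (g⁻¹ * ·) '' coneOf T w' = coneOf T w := by
  rw [← himage, Set.image_image]
  simp

theorem sameAtom_mul_left (hw' : IsConeGate T w')
    (hg : g * w = w') (himage : (g * ·) '' coneOf T w = coneOf T w') {k : ℕ} {x y : K}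
    (hx : x ∈ coneOf T w) (hy : y ∈ coneOf T w) (hxy : SameAtom T (wordLength T w + k) x y) :
    SameAtom T (wordLength T w' + k) (g * x) (g * y) := by
  have hgx : g * x ∈ coneOf T w' := himage ▸ Set.mem_image_of_mem _ hx
  have hgy : g * y ∈ coneOf T w' := himage ▸ Set.mem_image_of_mem _ hy
  have key : ∀ a ∈ ball T (wordLength T w' + k),
      (wordDist T (g * x) a : ℤ) - wordDist T (g * y) a = wordDist T x w - wordDist T y w := by
    intro a ha
    by_cases hac : a ∈ coneOf T w'
    · obtain ⟨a₀, ha₀, rfl⟩ : a ∈ (g * ·) '' coneOf T w := himage ▸ hac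
      have ha₀k : a₀ ∈ ball T (wordLength T w + k) := by
        rw [mem_ball_iff_of_mem_coneOf ha₀, ← wordDist_mul_left g, hg,
          ← mem_ball_iff_of_mem_coneOf hac]
        exact ha
      rw [wordDist_mul_left, wordDist_mul_left]
      exact hxy a₀ ha₀k w (by simp [ball])
    · rw [hw' _ hgx a hac, hw' _ hgy a hac, ← hg, wordDist_mul_left, wordDist_mul_left]
      push_cast
      ring
  intro a ha b hb
  rw [key a ha, key b hb]

theorem isMorphism_of_isConeGate (hT : Subgroup.closure T = ⊤) (hw : IsConeGate T w)
    (hw' : IsConeGate T w') (hg : g * w = w') (himage : (g * ·) '' coneOf T w = coneOf T w') :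
    IsMorphism T g (wordLength T w) (coneOf T w) (wordLength T w') (coneOf T w') := by
  refine ⟨himage, fun k => ?_, ?_⟩
  · rw [coneOf_inter_ball, coneOf_inter_ball, Set.image_inter (mul_right_injective g), himage,
      image_mul_left_setOf_wordDist_le, hg]
  rintro k - A' ⟨⟨x, rfl⟩, hinf⟩ hsub
  have hx : x ∈ coneOf T w := hsub (sameAtom_refl _ x)
  have hgx : g * x ∈ coneOf T w' := himage ▸ Set.mem_image_of_mem _ hx
  refine ⟨⟨⟨g * x, ?_⟩, hinf.image (mul_right_injective g).injOn⟩,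
    himage ▸ Set.image_mono hsub⟩
  ext z
  constructor
  · rintro ⟨y, hy, rfl⟩
    exact sameAtom_mul_left hw' hg himage hx (hsub hy) hy
  · intro hz
    have hzc := mem_coneOf_of_sameAtom hT (Nat.le_add_right _ k) hgx hz
    refine ⟨g⁻¹ * z, ?_, mul_inv_cancel_left g z⟩
    show SameAtom T _ x (g⁻¹ * z)
    simpa using sameAtom_mul_left hw (by rw [← hg, inv_mul_cancel_left])
      (image_coneOf_inv himage) hgx hzc hz

end Morphism

end WordMetric

theorem List.IsChain.fst_ne_append_singleton {ι : Type*} {M : ι → Type*}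
    {L : List (Σ i, M i)} {j : ι} {x y : M j}
    (h : (L ++ [(⟨j, x⟩ : Σ i, M i)]).IsChain fun l l' => l.1 ≠ l'.1) :
    (L ++ [(⟨j, y⟩ : Σ i, M i)]).IsChain fun l l' => l.1 ≠ l'.1 := by
  rw [List.isChain_append] at h ⊢
  exact ⟨h.1, List.isChain_singleton _, by simpa using h.2.2⟩

namespace Monoid.CoprodI.Word

variable {ι : Type*} {M : ι → Type*} [∀ i, Monoid (M i)] [DecidableEq ι]
  [∀ i, DecidableEq (M i)]

theorem toList_equiv_eq {z : CoprodI M} {L : List (Σ i, M i)} (hne : ∀ l ∈ L, l.2 ≠ 1)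
    (hchain : L.IsChain fun l l' => l.1 ≠ l'.1) (hprod : (L.map fun l => of l.2).prod = z) :
    (equiv z).toList = L := by
  subst hprod
  exact congrArg toList (equiv.apply_symm_apply ⟨L, hne, hchain⟩)

theorem prod_map_toList_equiv (z : CoprodI M) :
    ((equiv z).toList.map fun l => of l.2).prod = z :=
  equiv.symm_apply_apply z

theorem toList_equiv_of {i : ι} {m : M i} (hm : m ≠ 1) : (equiv (of m)).toList = [⟨i, m⟩] :=
  toList_equiv_eq (by simpa) (List.isChain_singleton _) (by simp)

theorem toList_equiv_one : (equiv (1 : CoprodI M)).toList = [] :=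
  toList_equiv_eq (by simp) List.isChain_nil (by simp)

/-- Multiplying on the right by a letter only changes the end of the reduced word, so the
first letter survives unless the word has at most one letter, from the same factor. -/
theorem head?_toList_equiv_mul_of {z : CoprodI M} {i : ι} (m : M i)
    (hz : z ∉ Set.range (of (i := i))) :
    (equiv (z * of m)).toList.head? = (equiv z).toList.head? := by
  by_cases hm : m = 1
  · simp [hm]
  obtain hnil | ⟨L₀, ⟨j, x⟩, hL⟩ := List.eq_nil_or_concat (equiv z).toList
  · refine absurd ⟨1, ?_⟩ hz
    rw [map_one, ← prod_map_toList_equiv z, hnil, List.map_nil, List.prod_nil]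
  rw [List.concat_eq_append] at hL
  have hchain := (equiv z).chain_ne
  have hne := (equiv z).ne_one
  rw [hL] at hchain hne
  have hz' : z = (L₀.map fun l => of l.2).prod * of x := by
    rw [← prod_map_toList_equiv z, hL]
    simp
  by_cases hji : j = i
  · subst hji
    have hL₀ : L₀ ≠ [] := by
      rintro rfl
      exact hz ⟨x, by simp [hz']⟩
    suffices ∃ L', (equiv (z * of m)).toList = L₀ ++ L' by
      obtain ⟨L', hL'⟩ := this
      rw [hL', hL, List.head?_append_of_ne_nil _ hL₀, List.head?_append_of_ne_nil _ hL₀]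
    by_cases hxm : x * m = 1
    · refine ⟨[], toList_equiv_eq (fun l hl => hne l (List.mem_append_left _ (by simpa using hl)))
        (by simpa using hchain.left_of_append) ?_⟩
      simp [hz', mul_assoc, ← map_mul, hxm]
    · refine ⟨[⟨j, x * m⟩], toList_equiv_eq ?_ hchain.fst_ne_append_singleton ?_⟩
      · simp only [List.mem_append, List.mem_singleton]
        rintro l (hl | rfl)
        exacts [hne l (by simp [hl]), hxm]
      · simp [hz', mul_assoc]
  · have hL' : (equiv (z * of m)).toList = L₀ ++ [⟨j, x⟩] ++ [⟨i, m⟩] := by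
      refine toList_equiv_eq ?_ ?_ ?_
      · simp only [List.mem_append, List.mem_singleton]
        rintro l ((hl | rfl) | rfl)
        exacts [hne l (by simp [hl]), hne _ (by simp), hm]
      · rw [List.isChain_append]
        exact ⟨hchain, List.isChain_singleton _, by simpa using hji⟩
      · simp [hz', mul_assoc]
    rw [hL', hL, List.head?_append_of_ne_nil _ (by simp)]

end Monoid.CoprodI.Word

universe u

instance Bool.condMonoid (M N : Type u) [Monoid M] [Monoid N] : ∀ b, Monoid (cond b M N)
  | true => ‹Monoid M›
  | false => ‹Monoid N›

namespace Monoid.Coprod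

open CoprodI

variable {M N : Type u} [Monoid M] [Monoid N]

def equivCoprodI : Monoid.Coprod M N ≃* CoprodI fun b : Bool => cond b M N :=
  MonoidHom.toMulEquiv
    (lift (of (M := fun b : Bool => cond b M N) (i := true))
      (of (M := fun b : Bool => cond b M N) (i := false)))
    (CoprodI.lift fun | true => inl | false => inr)
    (by ext <;> simp)
    (by ext (_ | _) <;> simp)

@[simp]
theorem equivCoprodI_inl (m : M) : equivCoprodI (inl m : Monoid.Coprod M N) = of (i := true) m :=
  by simp [equivCoprodI]

@[simp]
theorem equivCoprodI_inr (n : N) : equivCoprodI (inr n : Monoid.Coprod M N) = of (i := false) n :=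
  by simp [equivCoprodI]


def headLetter (z : Monoid.Coprod M N) : Option (Σ b, cond b M N) :=
  (Word.equiv (equivCoprodI z)).toList.head?

@[simp]
theorem headLetter_one : headLetter (1 : Monoid.Coprod M N) = none := by
  simp [headLetter, Word.toList_equiv_one]

theorem headLetter_inl {m : M} (hm : m ≠ 1) :
    headLetter (inl m : Monoid.Coprod M N) = some ⟨true, m⟩ := by
  simp [headLetter, Word.toList_equiv_of (M := fun b : Bool => cond b M N) (i := true) hm]

theorem headLetter_inr {n : N} (hn : n ≠ 1) :
    headLetter (inr n : Monoid.Coprod M N) = some ⟨false, n⟩ := by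
  simp [headLetter, Word.toList_equiv_of (M := fun b : Bool => cond b M N) (i := false) hn]

theorem headLetter_mul_inl {z : Monoid.Coprod M N} (hz : z ∉ Set.range inl) (m : M) :
    headLetter (z * inl m) = headLetter z := by
  rw [headLetter, map_mul, equivCoprodI_inl]
  refine Word.head?_toList_equiv_mul_of _ fun ⟨x, hx⟩ => hz ⟨x, equivCoprodI.injective ?_⟩
  simpa using hx

theorem headLetter_mul_inr {z : Monoid.Coprod M N} (hz : z ∉ Set.range inr) (n : N) :
    headLetter (z * inr n) = headLetter z := by
  rw [headLetter, map_mul, equivCoprodI_inr]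
  refine Word.head?_toList_equiv_mul_of _ fun ⟨x, hx⟩ => hz ⟨x, equivCoprodI.injective ?_⟩
  simpa using hx

end Monoid.Coprod

namespace FPZ

open Monoid.Coprod

variable {G : Type} [Group G] {S : Set G}

theorem tGen_mem_fpGen : tGen G ∈ fpGen G S :=
  Set.mem_union_right _ (Set.mem_singleton _)

theorem closure_fpGen_eq_top (hgen : Subgroup.closure S = ⊤) :
    Subgroup.closure (fpGen G S) = ⊤ := by
  rw [eq_top_iff, ← closure_range_inl_union_inr, Subgroup.closure_le]
  rintro _ (⟨g, rfl⟩ | ⟨n, rfl⟩)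
  · have hg : inl g ∈ (Subgroup.closure S).map (inl : G →* FPZ G) :=
      Subgroup.mem_map_of_mem _ (hgen ▸ Subgroup.mem_top g)
    rw [MonoidHom.map_closure] at hg
    exact Subgroup.closure_mono Set.subset_union_left hg
  · have hn : inr n = tGen G ^ n.toAdd := by
      rw [tGen, ← map_zpow, ← ofAdd_zsmul, smul_eq_mul, mul_one, ofAdd_toAdd]
    rw [SetLike.mem_coe, hn]
    exact Subgroup.zpow_mem _ (Subgroup.subset_closure tGen_mem_fpGen) _

theorem eq_inl_or_eq_inr_of_mem_fpGen {s : FPZ G} (hs : s ∈ fpGen G S ∨ s⁻¹ ∈ fpGen G S) :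
    (∃ g : G, s = inl g) ∨ ∃ e : ℤ, (e = 1 ∨ e = -1) ∧ s = inr (.ofAdd e) := by
  rcases hs with (⟨g, -, rfl⟩ | rfl) | (⟨g, -, hg⟩ | hs)
  · exact Or.inl ⟨g, rfl⟩
  · exact Or.inr ⟨1, Or.inl rfl, rfl⟩
  · exact Or.inl ⟨g⁻¹, by rw [map_inv, hg, inv_inv]⟩
  · refine Or.inr ⟨-1, Or.inr rfl, ?_⟩
    rw [← inv_inv s, Set.mem_singleton_iff.mp hs, tGen, ← map_inv]
    rfl

/-- The vertices of the Cayley graph beyond the edge from `1` to `t`. -/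
def tSide (G : Type) [Group G] : Set (FPZ G) :=
  {z | ∃ n : Multiplicative ℤ, 0 < n.toAdd ∧ headLetter z = some ⟨false, n⟩}

theorem inl_not_mem_tSide (g : G) : inl g ∉ tSide G := by
  rintro ⟨n, -, hn⟩
  by_cases hg : g = 1
  · simp [hg] at hn
  · simp [headLetter_inl hg] at hn

theorem inr_mem_tSide_iff (n : Multiplicative ℤ) : inr n ∈ tSide G ↔ 0 < n.toAdd := by
  by_cases hn : n = 1
  · simp [hn, tSide]
  · simp only [tSide, Set.mem_ofPred_eq, headLetter_inr hn, Option.some.injEq, Sigma.mk.injEq,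
      heq_eq_eq, true_and]
    exact ⟨fun ⟨_, hpos, h⟩ => h ▸ hpos, fun h => ⟨n, h, rfl⟩⟩

theorem mul_mem_tSide_iff_or {z s : FPZ G} (hs : s ∈ fpGen G S ∨ s⁻¹ ∈ fpGen G S) :
    (z * s ∈ tSide G ↔ z ∈ tSide G) ∨ (z = 1 ∧ z * s = tGen G) ∨ (z = tGen G ∧ z * s = 1) := by
  rcases eq_inl_or_eq_inr_of_mem_fpGen hs with ⟨g, rfl⟩ | ⟨e, he, rfl⟩
  · left
    by_cases hz : z ∈ Set.range inl
    · obtain ⟨x, rfl⟩ := hz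
      rw [← map_mul]
      exact iff_of_false (inl_not_mem_tSide _) (inl_not_mem_tSide _)
    · simp only [tSide, Set.mem_ofPred_eq, headLetter_mul_inl hz]
  by_cases hz : z ∈ Set.range inr
  swap
  · left
    simp only [tSide, Set.mem_ofPred_eq, headLetter_mul_inr hz]
  obtain ⟨n, rfl⟩ := hz
  obtain ⟨k, rfl⟩ := Multiplicative.ofAdd.surjective n
  rw [← map_mul, ← ofAdd_add, inr_mem_tSide_iff, inr_mem_tSide_iff, toAdd_ofAdd, toAdd_ofAdd]
  by_cases h : 0 < k + e ↔ 0 < k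
  · exact Or.inl h
  right
  obtain ⟨rfl, hke⟩ | ⟨rfl, hke⟩ : (k = 0 ∧ k + e = 1) ∨ (k = 1 ∧ k + e = 0) := by omega
  · left
    simp [hke, tGen]
  · right
    simp [hke, tGen]

end FPZ

namespace FPZ

open Monoid.Coprod WordMetric

variable {G : Type} [Group G] {S : Set G}

/-- The side of `w` of the edge from `w * t⁻¹` to `w`. -/
def farSide (w : FPZ G) : Set (FPZ G) :=
  (tGen G * w⁻¹ * ·) ⁻¹' tSide G

theorem mem_farSide_self (w : FPZ G) : w ∈ farSide w := by
  show tGen G * w⁻¹ * w ∈ tSide G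
  rw [inv_mul_cancel_right]
  exact (inr_mem_tSide_iff _).mpr one_pos

theorem mul_tGen_inv_not_mem_farSide (w : FPZ G) : w * (tGen G)⁻¹ ∉ farSide w := by
  show tGen G * w⁻¹ * (w * (tGen G)⁻¹) ∉ tSide G
  rw [mul_assoc, inv_mul_cancel_left, mul_inv_cancel, ← map_one inr, inr_mem_tSide_iff]
  simp

theorem mul_tGen_pow_mem_farSide (w : FPZ G) (k : ℕ) : w * tGen G ^ k ∈ farSide w := by
  show tGen G * w⁻¹ * (w * tGen G ^ k) ∈ tSide G
  rw [mul_assoc, inv_mul_cancel_left, ← pow_succ', tGen, ← map_pow, inr_mem_tSide_iff,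
    ← ofAdd_nsmul, toAdd_ofAdd, nsmul_one]
  positivity

theorem image_mul_left_farSide (g w : FPZ G) : (g * ·) '' farSide w = farSide (g * w) := by
  ext z
  simp only [Set.image_mul_left, farSide, Set.mem_preimage, mul_inv_rev, mul_assoc]

theorem mul_mem_farSide_iff_or {w x s : FPZ G} (hs : s ∈ fpGen G S ∨ s⁻¹ ∈ fpGen G S) :
    (x * s ∈ farSide w ↔ x ∈ farSide w) ∨ (x = w * (tGen G)⁻¹ ∧ x * s = w) ∨
      (x = w ∧ x * s = w * (tGen G)⁻¹) := by
  have hsolve : ∀ y c : FPZ G, tGen G * w⁻¹ * y = c → y = w * (tGen G)⁻¹ * c := by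
    rintro y c rfl
    group
  rcases mul_mem_tSide_iff_or (z := tGen G * w⁻¹ * x) hs with h | ⟨h₁, h₂⟩ | ⟨h₁, h₂⟩
  · left
    simpa only [farSide, Set.mem_preimage, mul_assoc] using h
  · right; left
    exact ⟨by simpa using hsolve x 1 h₁,
      by simpa using hsolve (x * s) (tGen G) (by rwa [← mul_assoc])⟩
  · right; right
    exact ⟨by simpa using hsolve x _ h₁, by simpa using hsolve (x * s) 1 (by rwa [← mul_assoc])⟩

/-- Every path from `farSide w` to its complement crosses the edge from `w` to `w * t⁻¹`. -/
theorem wordDist_add_le_length (hT : Subgroup.closure (fpGen G S) = ⊤) {w x : FPZ G}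
    {l : List (FPZ G)} (hl : ∀ s ∈ l, s ∈ fpGen G S ∨ s⁻¹ ∈ fpGen G S) (hx : x ∈ farSide w)
    (hxl : x * l.prod ∉ farSide w) :
    wordDist (fpGen G S) x w + 1 + wordDist (fpGen G S) (w * (tGen G)⁻¹) (x * l.prod) ≤
      l.length := by
  induction l generalizing x with
  | nil => exact absurd (by simpa using hx) hxl
  | cons s l ih =>
    have hs := hl s List.mem_cons_self
    rw [List.prod_cons, ← mul_assoc] at hxl ⊢
    rw [List.length_cons]
    rcases mul_mem_farSide_iff_or (w := w) (x := x) hs with h | ⟨rfl, -⟩ | ⟨rfl, hws⟩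
    · have hstep := ih (fun u hu => hl u (List.mem_cons_of_mem s hu)) (h.mpr hx) hxl
      have htri := wordDist_triangle hT x (x * s) w
      have hxs := wordDist_mul_le_one (T := fpGen G S) x hs
      omega
    · exact absurd hx (mul_tGen_inv_not_mem_farSide w)
    · rw [← hws, wordDist_self, wordDist, inv_mul_cancel_left]
      have := wordLength_le_length (fun u hu => hl u (List.mem_cons_of_mem s hu)) rfl
      omega

theorem wordDist_add_le_wordDist (hT : Subgroup.closure (fpGen G S) = ⊤) {w x a : FPZ G}
    (hx : x ∈ farSide w) (ha : a ∉ farSide w) :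
    wordDist (fpGen G S) x w + 1 + wordDist (fpGen G S) (w * (tGen G)⁻¹) a ≤
      wordDist (fpGen G S) x a := by
  obtain ⟨l, hlen, hl, hprod⟩ := exists_word_length_eq hT (x⁻¹ * a)
  have h := wordDist_add_le_length hT hl hx (by rwa [hprod, mul_inv_cancel_left])
  rwa [hprod, mul_inv_cancel_left, hlen] at h

variable {w : FPZ G}

theorem wordLength_mul_tGen_inv_lt (hT : Subgroup.closure (fpGen G S) = ⊤)
    (hw : EndsWithT G S w) :
    wordLength (fpGen G S) (w * (tGen G)⁻¹) < wordLength (fpGen G S) w := by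
  obtain ⟨l, hlen, hl, hprod⟩ := exists_word_length_eq hT w
  obtain ⟨l₀, rfl⟩ := List.getLast?_eq_some_iff.mp (hw l hl hprod hlen)
  calc wordLength (fpGen G S) (w * (tGen G)⁻¹)
      ≤ l₀.length := wordLength_le_length (fun s hs => hl s (by simp [hs])) (by simp [← hprod])
    _ < (l₀ ++ [tGen G]).length := by simp
    _ = wordLength (fpGen G S) w := hlen

theorem one_not_mem_farSide (hT : Subgroup.closure (fpGen G S) = ⊤) (hw : EndsWithT G S w) :
    1 ∉ farSide w := fun h => by
  have h₁ := wordDist_add_le_wordDist hT h (mul_tGen_inv_not_mem_farSide w)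
  have h₂ := wordLength_mul_tGen_inv_lt hT hw
  simp only [wordDist_one_left, wordDist_self] at h₁
  omega

theorem wordDist_mul_tGen_inv_le_one (w : FPZ G) :
    wordDist (fpGen G S) w (w * (tGen G)⁻¹) ≤ 1 :=
  wordDist_mul_le_one w (Or.inr (by simpa using tGen_mem_fpGen))

theorem coneOf_eq_farSide (hT : Subgroup.closure (fpGen G S) = ⊤) (hw : EndsWithT G S w) :
    coneOf (fpGen G S) w = farSide w := by
  ext x
  constructor
  · intro hx
    by_contra hxw
    have h₁ := wordDist_add_le_wordDist hT (mem_farSide_self w) hxw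
    have h₂ := wordDist_triangle hT 1 (w * (tGen G)⁻¹) x
    have h₃ := wordLength_mul_tGen_inv_lt hT hw
    have hx' := hx.out
    simp only [wordDist_one_left, wordDist_self] at h₁ h₂
    omega
  · intro hx
    have h₁ := wordDist_add_le_wordDist hT hx (one_not_mem_farSide hT hw)
    have h₂ := wordDist_triangle hT w (w * (tGen G)⁻¹) 1
    have h₃ := wordDist_mul_tGen_inv_le_one (S := S) w
    have h₄ := wordDist_triangle hT 1 w x
    simp only [wordDist_one_right hT, wordDist_one_left] at h₁ h₂ h₄
    rw [wordDist_comm hT x] at h₁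
    show wordLength (fpGen G S) x = wordLength (fpGen G S) w + wordDist (fpGen G S) w x
    omega

theorem isConeGate_of_endsWithT (hT : Subgroup.closure (fpGen G S) = ⊤)
    (hw : EndsWithT G S w) :
    IsConeGate (fpGen G S) w := by
  intro x hx a ha
  rw [coneOf_eq_farSide hT hw] at hx ha
  have h₁ := wordDist_add_le_wordDist hT hx ha
  have h₂ := wordDist_triangle hT w (w * (tGen G)⁻¹) a
  have h₃ := wordDist_mul_tGen_inv_le_one (S := S) w
  have h₄ := wordDist_triangle hT x w a
  omega

theorem coneOf_infinite (hT : Subgroup.closure (fpGen G S) = ⊤) (hw : EndsWithT G S w) :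
    (coneOf (fpGen G S) w).Infinite := by
  rw [coneOf_eq_farSide hT hw]
  refine Set.infinite_of_injective_forall_mem (fun j k h => ?_) (mul_tGen_pow_mem_farSide w)
  have h' : tGen G ^ j = tGen G ^ k := mul_left_cancel h
  rw [tGen, ← map_pow (inr (M := G)), ← map_pow (inr (M := G))] at h'
  simpa [← ofAdd_nsmul] using inr_injective h'

theorem image_mul_left_coneOf (hT : Subgroup.closure (fpGen G S) = ⊤) {w' : FPZ G}
    (hw : EndsWithT G S w) (hw' : EndsWithT G S w') :
    (w' * w⁻¹ * ·) '' coneOf (fpGen G S) w = coneOf (fpGen G S) w' := by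
  rw [coneOf_eq_farSide hT hw, coneOf_eq_farSide hT hw', image_mul_left_farSide,
    inv_mul_cancel_right]

end FPZ

theorem cone_is_atom_in_free_product_general (G : Type) [Group G]
    (S : Set G) (hgen : Subgroup.closure S = ⊤)
    (w w' : FPZ G) (hw : EndsWithT G S w) (hw' : EndsWithT G S w') :
    coneOf (fpGen G S) w ∈ InfAtoms (fpGen G S) (wordLength (fpGen G S) w) ∧
    SameType (fpGen G S) (wordLength (fpGen G S) w) (coneOf (fpGen G S) w)
      (wordLength (fpGen G S) w') (coneOf (fpGen G S) w') := by
  have hT := FPZ.closure_fpGen_eq_top hgen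
  have hgate := FPZ.isConeGate_of_endsWithT hT hw
  refine ⟨⟨⟨w, WordMetric.coneOf_eq_atomOf hT hgate⟩, FPZ.coneOf_infinite hT hw⟩, w' * w⁻¹, ?_⟩
  exact WordMetric.isMorphism_of_isConeGate hT hgate (FPZ.isConeGate_of_endsWithT hT hw')
    (inv_mul_cancel_right w' w) (FPZ.image_mul_left_coneOf hT hw hw')

/-- If every minimum-length word for `w ∈ G ∗ ℤ` ends with `t`, then the cone `C(w)`
is an (infinite) atom in `𝒜_{|w|}(G ∗ ℤ)`; moreover any two such atoms have the same
type. -/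
theorem cone_is_atom_in_free_product (G : Type) [Group G] [Nontrivial G]
    (S : Set G) (hSfin : S.Finite) (hgen : Subgroup.closure S = ⊤)
    (w w' : FPZ G) (hw : EndsWithT G S w) (hw' : EndsWithT G S w') :
    coneOf (fpGen G S) w ∈ InfAtoms (fpGen G S) (wordLength (fpGen G S) w) ∧
    SameType (fpGen G S) (wordLength (fpGen G S) w) (coneOf (fpGen G S) w)
      (wordLength (fpGen G S) w') (coneOf (fpGen G S) w') :=
  cone_is_atom_in_free_product_general G S hgen w w' hw hw'

end
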